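/- arXiv:2002.08175 — 2 statements merged into one kernel-verified Lean document; each statement's English description precedes it below -/
import Mathlib

section
/- If a finite family of intervals {[d1_i, d2_i]}_{i∈I} is reachable, then for every fixed index k ∈ I and every value q with d1_k ≤ q ≤ d2_k there exist probabilities p_i ∈ [d1_i, d2_i] for i ≠ k such that q + ∑_{i≠k} p_i = 1. -/
/-!
Summation is linear, so it maps the segment from `d1` to `d2` onto the interval
`[∑_{i ≠ k} d1 i, ∑_{i ≠ k} d2 i]`, and reachability at `k` together with `q ∈ [d1 k, d2 k]`
puts `1 - q` in that interval.
-/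

open Finset

theorem Finset.exists_sum_eq_of_sum_le_of_le_sum {ι 𝕜 : Type*} [Field 𝕜] [LinearOrder 𝕜]
    [IsStrictOrderedRing 𝕜] (s : Finset ι) {a b : ι → 𝕜} (hab : ∀ i ∈ s, a i ≤ b i) {x : 𝕜}
    (hax : ∑ i ∈ s, a i ≤ x) (hxb : x ≤ ∑ i ∈ s, b i) :
    ∃ p : ι → 𝕜, (∀ i ∈ s, a i ≤ p i ∧ p i ≤ b i) ∧ ∑ i ∈ s, p i = x := by
  let sum : (ι → 𝕜) →ᵃ[𝕜] 𝕜 := (∑ i ∈ s, LinearMap.proj i : (ι → 𝕜) →ₗ[𝕜] 𝕜).toAffineMap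
  have hx : x ∈ sum '' segment 𝕜 a b := by
    rw [image_segment]
    simpa [sum] using Icc_subset_segment ⟨hax, hxb⟩
  obtain ⟨p, hp, rfl⟩ := hx
  refine ⟨p, fun i hi => segment_subset_Icc (𝕜 := 𝕜) (hab i hi) ?_, by simp [sum]⟩
  simpa using image_segment 𝕜 (LinearMap.proj i : (ι → 𝕜) →ₗ[𝕜] 𝕜).toAffineMap a b ▸
    Set.mem_image_of_mem _ hp

theorem reachable_complete_to_one_general {I : Type*} [Fintype I] [DecidableEq I]
    (d1 d2 : I → ℝ)
    (hbounds : ∀ i, 0 ≤ d1 i ∧ d1 i ≤ d2 i ∧ d2 i ≤ 1)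
    (hreach : ∀ i, (∑ j ∈ Finset.univ.erase i, d1 j) + d2 i ≤ 1 ∧
                   1 ≤ (∑ j ∈ Finset.univ.erase i, d2 j) + d1 i)
    (k : I) (q : ℝ) (hq1 : d1 k ≤ q) (hq2 : q ≤ d2 k) :
    ∃ p : I → ℝ, (∀ i, i ≠ k → d1 i ≤ p i ∧ p i ≤ d2 i) ∧
      q + ∑ i ∈ Finset.univ.erase k, p i = 1 := by
  obtain ⟨p, hp, hsum⟩ := (univ.erase k).exists_sum_eq_of_sum_le_of_le_sum
    (fun i _ => (hbounds i).2.1) (x := 1 - q)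
    (by linarith [(hreach k).1]) (by linarith [(hreach k).2])
  exact ⟨p, fun i hik => hp i (mem_erase.2 ⟨hik, mem_univ i⟩), by linarith⟩

/-- If a finite family of intervals is reachable, then for every index `k` and
every `q ∈ [d1 k, d2 k]` there are values `p i ∈ [d1 i, d2 i]` for `i ≠ k`
with `q + ∑_{i ≠ k} p i = 1`. -/
theorem reachable_complete_to_one {I : Type*} [Fintype I] [DecidableEq I] [Nonempty I]
    (d1 d2 : I → ℝ)
    (hbounds : ∀ i, 0 ≤ d1 i ∧ d1 i ≤ d2 i ∧ d2 i ≤ 1)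
    (hreach : ∀ i, (∑ j ∈ Finset.univ.erase i, d1 j) + d2 i ≤ 1 ∧
                   1 ≤ (∑ j ∈ Finset.univ.erase i, d2 j) + d1 i)
    (k : I) (q : ℝ) (hq1 : d1 k ≤ q) (hq2 : q ≤ d2 k) :
    ∃ p : I → ℝ, (∀ i, i ≠ k → d1 i ≤ p i ∧ p i ≤ d2 i) ∧
      q + ∑ i ∈ Finset.univ.erase k, p i = 1 :=
  reachable_complete_to_one_general d1 d2 hbounds hreach k q hq1 hq2
end

section
/- Reachability of a family of intervals is equivalent to: for every k ∈ I and every q ∈ [d1_k, d2_k], the value 1 − q lies between ∑_{j≠k} d1_j and ∑_{j≠k} d2_j. -/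
theorem add_le_and_le_add_iff_forall_le_sub_and_sub_le {α : Type*} [AddCommGroup α] [LinearOrder α]
    [IsOrderedAddMonoid α] {s t a b c : α} (hab : a ≤ b) :
    (s + b ≤ c ∧ c ≤ t + a) ↔ ∀ q, a ≤ q → q ≤ b → s ≤ c - q ∧ c - q ≤ t := by
  simp only [le_sub_iff_add_le, sub_le_iff_le_add]
  constructor
  · rintro ⟨hb, ha⟩ q haq hqb
    exact ⟨(add_le_add_right hqb s).trans hb, ha.trans (add_le_add_right haq t)⟩
  · intro h
    exact ⟨(h b hab le_rfl).1, (h a le_rfl hab).2⟩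

theorem reachable_iff_complement_general {I : Type*} [Fintype I] [DecidableEq I]
    (d1 d2 : I → ℝ)
    (hbounds : ∀ i, 0 ≤ d1 i ∧ d1 i ≤ d2 i ∧ d2 i ≤ 1) :
    (∀ i, (∑ j ∈ Finset.univ.erase i, d1 j) + d2 i ≤ 1 ∧
          1 ≤ (∑ j ∈ Finset.univ.erase i, d2 j) + d1 i) ↔
    (∀ k, ∀ q : ℝ, d1 k ≤ q → q ≤ d2 k →
      (∑ j ∈ Finset.univ.erase k, d1 j) ≤ 1 - q ∧
      1 - q ≤ ∑ j ∈ Finset.univ.erase k, d2 j) :=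
  forall_congr' fun i => add_le_and_le_add_iff_forall_le_sub_and_sub_le (hbounds i).2.1

/-- Reachability of a family of intervals is equivalent to: for every `k` and
every `q ∈ [d1 k, d2 k]`, the value `1 - q` lies between `∑_{j ≠ k} d1 j`
and `∑_{j ≠ k} d2 j`. -/
theorem reachable_iff_complement {I : Type*} [Fintype I] [DecidableEq I] [Nonempty I]
    (d1 d2 : I → ℝ)
    (hbounds : ∀ i, 0 ≤ d1 i ∧ d1 i ≤ d2 i ∧ d2 i ≤ 1) :
    (∀ i, (∑ j ∈ Finset.univ.erase i, d1 j) + d2 i ≤ 1 ∧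
          1 ≤ (∑ j ∈ Finset.univ.erase i, d2 j) + d1 i) ↔
    (∀ k, ∀ q : ℝ, d1 k ≤ q → q ≤ d2 k →
      (∑ j ∈ Finset.univ.erase k, d1 j) ≤ 1 - q ∧
      1 - q ≤ ∑ j ∈ Finset.univ.erase k, d2 j) :=
  reachable_iff_complement_general d1 d2 hbounds
end
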